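/- Let A be a q×n real matrix whose rows are linearly independent, let b ∈ ℝ^q, and let f : ℝ^n → ℝ be convex and differentiable with ∇f Lipschitz continuous with constant L > 0 with respect to the Euclidean norm ‖·‖₂. Then the dual function θ(λ) = inf_{x ∈ ℝ^n} { f(x) + λᵀ(Ax − b) } is strongly concave on ℝ^q with constant of strong concavity λ_min(AAᵀ)/L with respect to ‖·‖₂ on ℝ^q. -/

import Mathlib

open scoped RealInnerProductSpace Matrix
noncomputable section

/-- `ℝ^k` with the Euclidean norm. -/
abbrev E (k : ℕ) := EuclideanSpace ℝ (Fin k)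

/-- `θ : C → ℝ ∪ {−∞}` is strongly concave on `C` with constant `α` w.r.t. the Euclidean
norm: for all `u, v` in the domain of `θ` (points of `C` where `θ` is finite) and `t ∈ [0,1]`,
`θ(t u + (1−t) v) ≥ t θ(u) + (1−t) θ(v) + (α t (1−t)/2)‖u−v‖²`. -/
def StrongConcaveOnE {k : ℕ} (C : Set (E k)) (α : ℝ) (θ : E k → EReal) : Prop :=
  ∀ ⦃u⦄, u ∈ C → θ u ≠ ⊤ → θ u ≠ ⊥ → ∀ ⦃v⦄, v ∈ C → θ v ≠ ⊤ → θ v ≠ ⊥ →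
    ∀ t ∈ Set.Icc (0:ℝ) 1,
      ((t * (θ u).toReal + (1 - t) * (θ v).toReal
          + α * t * (1 - t) / 2 * ‖u - v‖ ^ 2 : ℝ) : EReal) ≤ θ (t • u + (1 - t) • v)

/-!
The Lagrangian `ℒ(x, λ) = f x + λᵀ(Ax − b)` is affine in `λ`, and as a function of `x` it has the
`L`-Lipschitz gradient `∇f x + Aᵀλ`. The descent lemma, applied at the gradient step
`x − ∇ₓℒ / L`, gives `θ(λ) ≤ ℒ(x, λ) − ‖∇f x + Aᵀλ‖² / (2L)` for every `x`. Averaging this bound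
at `u` and `v` with weights `t` and `1 − t` bounds `ℒ(x, t u + (1 − t) v)` from below, and the
strong convexity of `‖·‖²` contributes the extra term `t(1 − t)‖Aᵀ(u − v)‖² / (2L)`, where
`‖Aᵀw‖² = wᵀAAᵀw ≥ λ_min(AAᵀ)‖w‖²`.
-/

open Matrix WithLp
open scoped NNReal

section LipschitzGradient

variable {F : Type*} [NormedAddCommGroup F] [InnerProductSpace ℝ F]

theorem strongConvexOn_univ_norm_sq : StrongConvexOn Set.univ 2 fun x : F => ‖x‖ ^ 2 :=
  strongConvexOn_iff_convex.2 (by simpa using convexOn_const (0 : ℝ) convex_univ)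

theorem mul_one_sub_mul_norm_sub_sq_le {t : ℝ} (ht0 : 0 ≤ t) (ht1 : t ≤ 1) (a b : F) :
    t * (1 - t) * ‖a - b‖ ^ 2 ≤ t * ‖a‖ ^ 2 + (1 - t) * ‖b‖ ^ 2 := by
  have h := strongConvexOn_univ_norm_sq.2 (Set.mem_univ a) (Set.mem_univ b) ht0
    (sub_nonneg.2 ht1) (add_sub_cancel t 1)
  simp only [smul_eq_mul] at h
  nlinarith [sq_nonneg ‖t • a + (1 - t) • b‖]

variable [CompleteSpace F] {g : F → ℝ} {G : F → F} {K : ℝ≥0}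

theorem HasGradientAt.add_inner_const {g' x : F} (hg : HasGradientAt g g' x) (c : F) :
    HasGradientAt (fun z => g z + ⟪c, z⟫) (g' + c) x := by
  rw [hasGradientAt_iff_hasFDerivAt, map_add]
  exact hg.hasFDerivAt.add (InnerProductSpace.toDual ℝ F c).hasFDerivAt

theorem le_add_inner_add_sq_of_lipschitzWith_gradient (hg : ∀ z, HasGradientAt g (G z) z)
    (hG : LipschitzWith K G) (x y : F) :
    g y ≤ g x + ⟪G x, y - x⟫ + K / 2 * ‖y - x‖ ^ 2 := by
  set v := y - x
  have hφ (s : ℝ) : HasDerivAt (fun s : ℝ => g (x + s • v)) ⟪G (x + s • v), v⟫ s := by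
    have hpath : HasDerivAt (fun s : ℝ => x + s • v) v s := by
      simpa using ((hasDerivAt_id s).smul_const v).const_add x
    have h := (hg (x + s • v)).hasFDerivAt.comp_hasDerivAt s hpath
    simp only [InnerProductSpace.toDual_apply_apply] at h
    exact h
  have hB (s : ℝ) : HasDerivAt (fun s : ℝ => g x + s * ⟪G x, v⟫ + K / 2 * ‖v‖ ^ 2 * s ^ 2)
      (⟪G x, v⟫ + K * ‖v‖ ^ 2 * s) s :=
    ((((hasDerivAt_id s).mul_const ⟪G x, v⟫).const_add (g x)).add
      ((hasDerivAt_pow 2 s).const_mul (K / 2 * ‖v‖ ^ 2))).congr_deriv (by ring)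
  have hslope (s : ℝ) (hs : 0 ≤ s) : ⟪G (x + s • v), v⟫ ≤ ⟪G x, v⟫ + K * ‖v‖ ^ 2 * s := by
    have hdist : ‖G (x + s • v) - G x‖ ≤ K * (s * ‖v‖) := by
      simpa [← dist_eq_norm, norm_smul, abs_of_nonneg hs] using hG.dist_le_mul (x + s • v) x
    have := (real_inner_le_norm (G (x + s • v) - G x) v).trans
      (mul_le_mul_of_nonneg_right hdist (norm_nonneg v))
    rw [inner_sub_left] at this
    linarith
  have key := image_le_of_deriv_right_le_deriv_boundary (a := 0) (b := 1)
    (fun s _ => (hφ s).continuousAt.continuousWithinAt) (fun s _ => (hφ s).hasDerivWithinAt)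
    (by simp) (fun s _ => (hB s).continuousAt.continuousWithinAt)
    (fun s _ => (hB s).hasDerivWithinAt) (fun s hs => hslope s hs.1)
    (Set.right_mem_Icc.2 zero_le_one)
  simpa [v] using key

theorem add_sq_norm_div_le_of_lipschitzWith_gradient (hg : ∀ z, HasGradientAt g (G z) z)
    (hG : LipschitzWith K G) (hK : 0 < K) {m : ℝ} (hm : ∀ z, m ≤ g z) (x : F) :
    m + ‖G x‖ ^ 2 / (2 * K) ≤ g x := by
  have hK' : (0 : ℝ) < K := hK
  have h := le_add_inner_add_sq_of_lipschitzWith_gradient hg hG x (x - (K : ℝ)⁻¹ • G x)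
  rw [sub_sub_cancel_left, inner_neg_right, real_inner_smul_right, real_inner_self_eq_norm_sq,
    norm_neg, norm_smul, Real.norm_of_nonneg (inv_nonneg.2 hK'.le)] at h
  have : g x - ‖G x‖ ^ 2 / (2 * K)
      = g x + -((K : ℝ)⁻¹ * ‖G x‖ ^ 2) + K / 2 * ((K : ℝ)⁻¹ * ‖G x‖) ^ 2 := by
    field_simp
    ring
  linarith [hm (x - (K : ℝ)⁻¹ • G x)]

end LipschitzGradient

section Matrix

variable {ι κ : Type*} [Fintype ι] [DecidableEq ι] [Fintype κ] [DecidableEq κ]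

theorem Matrix.IsHermitian.iInf_eigenvalues_mul_norm_sq_le {M : Matrix ι ι ℝ}
    (hM : M.IsHermitian) (w : EuclideanSpace ℝ ι) :
    (⨅ i, hM.eigenvalues i) * ‖w‖ ^ 2 ≤ ⟪w, toEuclideanLin M w⟫ := by
  set B := hM.eigenvectorBasis
  have hT : (toEuclideanLin M).IsSymmetric := isSymmetric_toEuclideanLin_iff.2 hM
  have hrepr (i : ι) : B.repr (toEuclideanLin M w) i = hM.eigenvalues i * B.repr w i := by
    have hB : toEuclideanLin M (B i) = hM.eigenvalues i • B i :=
      ofLp_injective 2 (hM.mulVec_eigenvectorBasis i)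
    rw [B.repr_apply_apply, B.repr_apply_apply, ← hT, hB, real_inner_smul_left]
  have hinner : ⟪w, toEuclideanLin M w⟫ = ∑ i, hM.eigenvalues i * B.repr w i ^ 2 := by
    rw [← B.repr.inner_map_map, PiLp.inner_apply]
    refine Finset.sum_congr rfl fun i _ => ?_
    rw [hrepr, RCLike.inner_apply, conj_trivial]
    ring
  rw [hinner, ← B.repr.norm_map, EuclideanSpace.real_norm_sq_eq, Finset.mul_sum]
  exact Finset.sum_le_sum fun i _ =>
    mul_le_mul_of_nonneg_right (ciInf_le (Set.finite_range _).bddBelow i) (sq_nonneg _)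

theorem Matrix.norm_sq_toEuclideanLin_transpose (A : Matrix ι κ ℝ) (w : EuclideanSpace ℝ ι) :
    ‖toEuclideanLin Aᵀ w‖ ^ 2 = ⟪w, toEuclideanLin (A * Aᵀ) w⟫ := by
  rw [toLpLin_mul 2 2 2, LinearMap.comp_apply, ← LinearMap.adjoint_inner_left,
    ← toEuclideanLin_conjTranspose_eq_adjoint, conjTranspose_eq_transpose_of_trivial,
    real_inner_self_eq_norm_sq]

end Matrix

section Lagrangian

variable {ι κ : Type*} [Fintype ι] [Fintype κ]
  (f : EuclideanSpace ℝ κ → ℝ) (A : Matrix ι κ ℝ) (b : ι → ℝ)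

def lagrangian (lam : EuclideanSpace ℝ ι) (x : EuclideanSpace ℝ κ) : ℝ :=
  f x + (lam : ι → ℝ) ⬝ᵥ (A *ᵥ x - b)

theorem lagrangian_smul_add_one_sub_smul (t : ℝ) (u v : EuclideanSpace ℝ ι)
    (x : EuclideanSpace ℝ κ) :
    lagrangian f A b (t • u + (1 - t) • v) x
      = t * lagrangian f A b u x + (1 - t) * lagrangian f A b v x := by
  simp only [lagrangian, ofLp_add, ofLp_smul, add_dotProduct, smul_dotProduct, smul_eq_mul]
  ring

variable [DecidableEq ι]

theorem lagrangian_eq_add_inner (lam : EuclideanSpace ℝ ι) (x : EuclideanSpace ℝ κ) :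
    lagrangian f A b lam x = f x + ⟪toEuclideanLin Aᵀ lam, x⟫ - (lam : ι → ℝ) ⬝ᵥ b := by
  simp [lagrangian, EuclideanSpace.inner_eq_star_dotProduct, toLpLin_apply, dotProduct_sub,
    mulVec_transpose, dotProduct_mulVec, dotProduct_comm, add_sub_assoc]

variable {f} {K : ℝ≥0}

theorem add_sq_norm_div_le_lagrangian (hdiff : Differentiable ℝ f)
    (hlip : LipschitzWith K (gradient f)) (hK : 0 < K) {lam : EuclideanSpace ℝ ι} {m : ℝ}
    (hm : ∀ z, m ≤ lagrangian f A b lam z) (x : EuclideanSpace ℝ κ) :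
    m + ‖gradient f x + toEuclideanLin Aᵀ lam‖ ^ 2 / (2 * K) ≤ lagrangian f A b lam x := by
  set c := toEuclideanLin Aᵀ lam
  have hbound := add_sq_norm_div_le_of_lipschitzWith_gradient (g := fun z => f z + ⟪c, z⟫)
    (fun z => (hdiff z).hasGradientAt.add_inner_const c)
    (by simpa using hlip.add (LipschitzWith.const c)) hK (m := m + (lam : ι → ℝ) ⬝ᵥ b)
    (fun z => by linarith [hm z, lagrangian_eq_add_inner f A b lam z]) x
  linarith [lagrangian_eq_add_inner f A b lam x]

variable [DecidableEq κ]

theorem add_iInf_eigenvalues_le_lagrangian (hH : (A * Aᵀ).IsHermitian)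
    (hdiff : Differentiable ℝ f) (hlip : LipschitzWith K (gradient f)) (hK : 0 < K)
    {u v : EuclideanSpace ℝ ι} {θu θv : ℝ} (hu : ∀ z, θu ≤ lagrangian f A b u z)
    (hv : ∀ z, θv ≤ lagrangian f A b v z) {t : ℝ} (ht0 : 0 ≤ t) (ht1 : t ≤ 1)
    (x : EuclideanSpace ℝ κ) :
    t * θu + (1 - t) * θv + (⨅ i, hH.eigenvalues i) / K * t * (1 - t) / 2 * ‖u - v‖ ^ 2
      ≤ lagrangian f A b (t • u + (1 - t) • v) x := by
  set pu := gradient f x + toEuclideanLin Aᵀ u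
  set pv := gradient f x + toEuclideanLin Aᵀ v
  have hpu := add_sq_norm_div_le_lagrangian A b hdiff hlip hK hu x
  have hpv := add_sq_norm_div_le_lagrangian A b hdiff hlip hK hv x
  have hray : (⨅ i, hH.eigenvalues i) * ‖u - v‖ ^ 2 ≤ ‖pu - pv‖ ^ 2 := by
    rw [add_sub_add_left_eq_sub, ← map_sub, norm_sq_toEuclideanLin_transpose]
    exact hH.iInf_eigenvalues_mul_norm_sq_le (u - v)
  have hK' : (0 : ℝ) < K := hK
  have hgap : (⨅ i, hH.eigenvalues i) / K * t * (1 - t) / 2 * ‖u - v‖ ^ 2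
      ≤ t * (‖pu‖ ^ 2 / (2 * K)) + (1 - t) * (‖pv‖ ^ 2 / (2 * K)) := by
    have htt : 0 ≤ t * (1 - t) := mul_nonneg ht0 (sub_nonneg.2 ht1)
    calc (⨅ i, hH.eigenvalues i) / K * t * (1 - t) / 2 * ‖u - v‖ ^ 2
        = t * (1 - t) * ((⨅ i, hH.eigenvalues i) * ‖u - v‖ ^ 2) / (2 * K) := by
          field_simp
      _ ≤ t * (1 - t) * ‖pu - pv‖ ^ 2 / (2 * K) := by gcongr
      _ ≤ (t * ‖pu‖ ^ 2 + (1 - t) * ‖pv‖ ^ 2) / (2 * K) := by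
          gcongr; exact mul_one_sub_mul_norm_sub_sq_le ht0 ht1 pu pv
      _ = t * (‖pu‖ ^ 2 / (2 * K)) + (1 - t) * (‖pv‖ ^ 2 / (2 * K)) := by ring
  rw [lagrangian_smul_add_one_sub_smul]
  nlinarith [mul_le_mul_of_nonneg_left hpu ht0, mul_le_mul_of_nonneg_left hpv (sub_nonneg.2 ht1)]

end Lagrangian

theorem EReal.toReal_iInf_coe_le {α : Type*} {h : α → ℝ} (htop : (⨅ a, (h a : EReal)) ≠ ⊤)
    (hbot : (⨅ a, (h a : EReal)) ≠ ⊥) (a : α) : (⨅ a, (h a : EReal)).toReal ≤ h a :=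
  EReal.coe_le_coe_iff.1 ((EReal.coe_toReal htop hbot).trans_le (iInf_le _ a))

theorem dual_function_strongly_concave_linear_constraints
    {n q : ℕ} (A : Matrix (Fin q) (Fin n) ℝ) (b : Fin q → ℝ)
    (hH : (A * Aᵀ).IsHermitian)
    (f : E n → ℝ) (hdiff : Differentiable ℝ f)
    (L : ℝ) (hL : 0 < L)
    (hlip : LipschitzWith (Real.toNNReal L) (fun x => gradient f x)) :
    StrongConcaveOnE Set.univ ((⨅ i, hH.eigenvalues i) / L)
      (fun lam => ⨅ x : E n, ((f x + (lam : Fin q → ℝ) ⬝ᵥ (A.mulVec x - b) : ℝ) : EReal)) := by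
  intro u _ hut hub v _ hvt hvb t ⟨ht0, ht1⟩
  refine le_iInf fun x => EReal.coe_le_coe_iff.2 ?_
  have h := add_iInf_eigenvalues_le_lagrangian A b hH hdiff hlip (Real.toNNReal_pos.2 hL)
    (EReal.toReal_iInf_coe_le hut hub) (EReal.toReal_iInf_coe_le hvt hvb) ht0 ht1 x
  rwa [Real.coe_toNNReal L hL.le] at h
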